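/- arXiv:2001.10623 — 5 statements merged into one kernel-verified Lean document; each statement's English description precedes it below -/
import Mathlib

section
/- Let c ∈ [0, 1/2] and let η > 0 satisfy (1 − e^{−η})/η ≥ 2c and (e^{η} − 1)/η ≤ 2(1 − c) (both conditions hold in particular whenever 0 < η ≤ 1 − 2c). Then for every r ∈ [0,1]: r − (1 − 2c)·min(r, 1 − r) ≤ −(1/η)·log(1 + r·(e^{−η} − 1)). -/
/-- The key comparison of Lemma 4: the expected per-round loss of the abstention
algorithm, `g(r) = r - (1 - 2c) · min(r, 1-r)`, is bounded by the per-round mix loss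
`f(r) = -(1/η) · log(1 + r·(e^{-η} - 1))` for all `r ∈ [0,1]`, whenever the
endpoint-derivative conditions `(1 - e^{-η})/η ≥ 2c` and `(e^{η} - 1)/η ≤ 2(1-c)` hold. -/
theorem abstention_loss_le_mix_loss (c η r : ℝ) (hc0 : 0 ≤ c) (hc : c ≤ 1 / 2)
    (hη : 0 < η)
    (h1 : 2 * c ≤ (1 - Real.exp (-η)) / η)
    (h2 : (Real.exp η - 1) / η ≤ 2 * (1 - c))
    (hr0 : 0 ≤ r) (hr1 : r ≤ 1) :
    r - (1 - 2 * c) * min r (1 - r) ≤ -(1 / η) * Real.log (1 + r * (Real.exp (-η) - 1)) := by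
  have hexppos : 0 < Real.exp (-η) := Real.exp_pos _
  have hle1 : Real.exp (-η) ≤ 1 := by
    rw [Real.exp_le_one_iff]; linarith
  have hpos : 0 < 1 + r * (Real.exp (-η) - 1) := by
    nlinarith [mul_nonneg (sub_nonneg.2 hr1) (sub_nonneg.2 hle1)]
  set X := 1 + r * (Real.exp (-η) - 1) with hX
  have hrw : -(1 / η) * Real.log X = (-Real.log X) / η := by ring
  rw [hrw]
  rcases le_or_gt r (1 - r) with h | h
  · rw [min_eq_left h]
    have hlog : Real.log X ≤ X - 1 := Real.log_le_sub_one_of_pos hpos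
    have h1' : 2 * c * η ≤ 1 - Real.exp (-η) := by
      rw [le_div_iff₀ hη] at h1; linarith
    rw [le_div_iff₀ hη]
    nlinarith [mul_le_mul_of_nonneg_left h1' hr0]
  · rw [min_eq_right (le_of_lt h)]
    have hme : Real.exp (-η) * Real.exp η = 1 := by
      rw [← Real.exp_add]; simp
    have hYpos : 0 < 1 + (1 - r) * (Real.exp η - 1) := by
      nlinarith [Real.one_le_exp (le_of_lt hη)]
    have hXeq : X = Real.exp (-η) * (1 + (1 - r) * (Real.exp η - 1)) := by
      rw [hX]; linear_combination (r - 1) * hme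
    have hlogX : Real.log X = -η + Real.log (1 + (1 - r) * (Real.exp η - 1)) := by
      rw [hXeq, Real.log_mul (ne_of_gt hexppos) (ne_of_gt hYpos), Real.log_exp]
    have hlogY : Real.log (1 + (1 - r) * (Real.exp η - 1)) ≤ (1 - r) * (Real.exp η - 1) := by
      have := Real.log_le_sub_one_of_pos hYpos; linarith
    have h2' : Real.exp η - 1 ≤ 2 * (1 - c) * η := by
      rw [div_le_iff₀ hη] at h2; linarith
    rw [le_div_iff₀ hη]
    nlinarith [mul_le_mul_of_nonneg_left h2' (by linarith : (0:ℝ) ≤ 1 - r)]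
end

section
/- If 0 ≤ c < 1/2 and 0 < η ≤ 1 − 2c, then the exponentially weighted forecaster with abstention satisfies R_T = ∑_{t=1}^T E[ℓ̂_t] − min_{i∈[N]} ∑_{t=1}^T ℓ_{t,i} ≤ (log N)/η. -/
noncomputable section

/-- Binary loss of expert `i` in round `t`: `1[y_{t,i} ≠ y_t]`. -/
def expertLoss {N : ℕ} (adv : ℕ → Fin N → ℝ) (y : ℕ → ℝ) (t : ℕ) (i : Fin N) : ℝ :=
  if adv t i = y t then 0 else 1

/-- Normalized exponential weight `q_{t,i}` of expert `i` in round `t`. -/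
def ewQ {N : ℕ} (η : ℝ) (adv : ℕ → Fin N → ℝ) (y : ℕ → ℝ) (t : ℕ) (i : Fin N) : ℝ :=
  Real.exp (-η * ∑ k ∈ Finset.range t, expertLoss adv y k i) /
    ∑ j, Real.exp (-η * ∑ k ∈ Finset.range t, expertLoss adv y k j)

/-- Aggregated prediction `p_t = ∑ i, q_{t,i} y_{t,i}`. -/
def aggP {N : ℕ} (η : ℝ) (adv : ℕ → Fin N → ℝ) (y : ℕ → ℝ) (t : ℕ) : ℝ :=
  ∑ i, ewQ η adv y t i * adv t i

/-- Expected per-round loss of the exponentially weighted forecaster with abstention: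
with `p* = max(p_t, 1 - p_t)`, `k* = 1[p_t ≥ 1/2]` and `α_t = 2(1 - p*)`, the expected
loss is `α_t · c_t + (1 - α_t) · 1[k* ≠ y_t]`. -/
def expAlgLoss {N : ℕ} (η : ℝ) (c : ℕ → ℝ) (adv : ℕ → Fin N → ℝ) (y : ℕ → ℝ) (t : ℕ) : ℝ :=
  let p := aggP η adv y t
  let pstar := max p (1 - p)
  let kstar : ℝ := if (1 : ℝ) / 2 ≤ p then 1 else 0
  let α := 2 * (1 - pstar)
  α * c t + (1 - α) * (if kstar = y t then 0 else 1)

end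

noncomputable section Aux

/-- total weight -/
def ewW {N : ℕ} (η : ℝ) (adv : ℕ → Fin N → ℝ) (y : ℕ → ℝ) (t : ℕ) : ℝ :=
  ∑ j, Real.exp (-η * ∑ k ∈ Finset.range t, expertLoss adv y k j)

lemma expertLoss_mem {N : ℕ} (adv : ℕ → Fin N → ℝ) (y : ℕ → ℝ) (t : ℕ) (i : Fin N) :
    expertLoss adv y t i = 0 ∨ expertLoss adv y t i = 1 := by
  unfold expertLoss; split <;> simp

lemma expA {η : ℝ} (h0 : 0 ≤ η) (h1 : η ≤ 1) : Real.exp η ≤ 1 + η + η ^ 2 := by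
  have hb := Real.exp_bound (x := η) (by rw [abs_of_nonneg h0]; exact h1) (n := 3) (by norm_num)
  rw [abs_of_nonneg h0] at hb
  have hs : ∑ m ∈ Finset.range 3, η ^ m / (m.factorial : ℝ) = 1 + η + η ^ 2 / 2 := by
    norm_num [Finset.sum_range_succ, Nat.factorial]
  rw [hs] at hb
  have h2 : Real.exp η - (1 + η + η ^ 2 / 2) ≤ η ^ 3 * (2 / 9) := by
    have := abs_le.mp hb
    have h3 : ((3:ℕ).succ : ℝ) / (((3:ℕ).factorial : ℝ) * (3:ℕ)) = 2 / 9 := by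
      norm_num [Nat.factorial]
    rw [h3] at this
    linarith [this.2]
  nlinarith [mul_le_of_le_one_right (sq_nonneg η) h1]

lemma expB {η : ℝ} (h0 : 0 ≤ η) : Real.exp (-η) ≤ 1 - η + η ^ 2 := by
  have h1 : (0:ℝ) < 1 + η := by linarith
  have h2 : 1 + η ≤ Real.exp η := by linarith [Real.add_one_le_exp η]
  have h3 : Real.exp (-η) ≤ 1 / (1 + η) := by
    rw [Real.exp_neg]
    rw [inv_eq_one_div]
    exact one_div_le_one_div_of_le h1 h2
  have h4 : 1 / (1 + η) ≤ 1 - η + η ^ 2 := by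
    rw [div_le_iff₀ h1]
    nlinarith [pow_nonneg h0 3]
  linarith

lemma key1 {c η m : ℝ} (hc0 : 0 ≤ c) (hη0 : 0 < η) (hη : η ≤ 1 - 2 * c)
    (hm0 : 0 ≤ m) (hm1 : m ≤ 1) :
    2 * c * m ≤ -Real.log (1 - m + m * Real.exp (-η)) / η := by
  have hE : Real.exp (-η) ≤ 1 - η + η ^ 2 := expB hη0.le
  have hEpos : 0 < Real.exp (-η) := Real.exp_pos _
  have hE1 : Real.exp (-η) ≤ 1 := by
    rw [Real.exp_le_one_iff]; linarith
  have hS : Real.exp (-η) ≤ 1 - m + m * Real.exp (-η) := by nlinarith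
  have hSpos : 0 < 1 - m + m * Real.exp (-η) := lt_of_lt_of_le hEpos hS
  have hlog : Real.log (1 - m + m * Real.exp (-η)) ≤ -m + m * Real.exp (-η) := by
    have := Real.log_le_sub_one_of_pos hSpos
    linarith
  rw [le_div_iff₀ hη0]
  have : -m + m * Real.exp (-η) ≤ -(2 * c * m * η) := by
    nlinarith [mul_nonneg hm0 (sub_nonneg.mpr hE),
      mul_nonneg (mul_nonneg hm0 hη0.le) (by linarith : (0:ℝ) ≤ 1 - η - 2 * c)]
  linarith

lemma key2 {c η m : ℝ} (hc0 : 0 ≤ c) (hη0 : 0 < η) (hη : η ≤ 1 - 2 * c)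
    (hm0 : 0 ≤ m) (hm1 : m ≤ 1) :
    2 * (1 - m) * c + 2 * m - 1 ≤ -Real.log (1 - m + m * Real.exp (-η)) / η := by
  have hη1 : η ≤ 1 := by linarith
  have hA : Real.exp η ≤ 1 + η + η ^ 2 := expA hη0.le hη1
  have hEpos : 0 < Real.exp (-η) := Real.exp_pos _
  have hE1 : Real.exp (-η) ≤ 1 := by rw [Real.exp_le_one_iff]; linarith
  have hS : Real.exp (-η) ≤ 1 - m + m * Real.exp (-η) := by nlinarith
  have hSpos : 0 < 1 - m + m * Real.exp (-η) := lt_of_lt_of_le hEpos hS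
  -- log S ≤ (1-m)(e^η - 1) - η
  have hmul : (1 - m + m * Real.exp (-η)) * Real.exp η = (1 - m) * Real.exp η + m := by
    have : Real.exp (-η) * Real.exp η = 1 := by
      rw [← Real.exp_add]; simp
    nlinarith [this]
  have hlog : Real.log (1 - m + m * Real.exp (-η)) ≤ (1 - m) * (Real.exp η - 1) - η := by
    have h1 : Real.log ((1 - m + m * Real.exp (-η)) * Real.exp η) ≤
        (1 - m) * Real.exp η + m - 1 := by
      rw [hmul]
      have := Real.log_le_sub_one_of_pos (x := (1 - m) * Real.exp η + m)
        (by rw [← hmul]; positivity)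
      linarith
    rw [Real.log_mul hSpos.ne' (Real.exp_pos η).ne', Real.log_exp] at h1
    linarith
  rw [le_div_iff₀ hη0]
  have hfin : (1 - m) * (Real.exp η - 1) - η ≤ -((2 * (1 - m) * c + 2 * m - 1) * η) := by
    have h2 : Real.exp η - 1 ≤ η * (2 - 2 * c) := by nlinarith
    nlinarith [mul_nonneg (by linarith : (0:ℝ) ≤ 1 - m)
      (by nlinarith : (0:ℝ) ≤ η * (2 - 2 * c) - (Real.exp η - 1))]
  linarith

section Weights

variable {N : ℕ} (η : ℝ) (adv : ℕ → Fin N → ℝ) (y : ℕ → ℝ)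

lemma ewW_pos [NeZero N] (t : ℕ) : 0 < ewW η adv y t :=
  Finset.sum_pos (fun _ _ => Real.exp_pos _) Finset.univ_nonempty

lemma ewQ_sum [NeZero N] (t : ℕ) : ∑ i, ewQ η adv y t i = 1 := by
  unfold ewQ
  rw [← Finset.sum_div]
  exact div_self (ewW_pos η adv y t).ne'

lemma ewQ_nonneg (t : ℕ) (i : Fin N) [NeZero N] : 0 ≤ ewQ η adv y t i := by
  unfold ewQ
  positivity

lemma ewW_step [NeZero N] (t : ℕ) :
    ewW η adv y (t + 1) =
      ewW η adv y t * (1 - (∑ i, ewQ η adv y t i * expertLoss adv y t i)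
        + (∑ i, ewQ η adv y t i * expertLoss adv y t i) * Real.exp (-η)) := by
  have hW := ewW_pos η adv y t
  have h1 : ewW η adv y (t + 1) =
      ∑ j, Real.exp (-η * ∑ k ∈ Finset.range t, expertLoss adv y k j) *
        (1 - expertLoss adv y t j + expertLoss adv y t j * Real.exp (-η)) := by
    unfold ewW
    refine Finset.sum_congr rfl fun j _ => ?_
    rw [Finset.sum_range_succ, show -η * ((∑ k ∈ Finset.range t, expertLoss adv y k j)
        + expertLoss adv y t j) = -η * (∑ k ∈ Finset.range t, expertLoss adv y k j)
        + -η * expertLoss adv y t j by ring, Real.exp_add]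
    rcases expertLoss_mem adv y t j with h | h <;> rw [h] <;> simp
  have hq : ∀ i : Fin N, ewQ η adv y t i * expertLoss adv y t i * ewW η adv y t =
      Real.exp (-η * ∑ k ∈ Finset.range t, expertLoss adv y k i) * expertLoss adv y t i := by
    intro i
    unfold ewQ ewW
    field_simp
  have hM : (∑ i, ewQ η adv y t i * expertLoss adv y t i) * ewW η adv y t =
      ∑ i, Real.exp (-η * ∑ k ∈ Finset.range t, expertLoss adv y k i) * expertLoss adv y t i := by
    rw [Finset.sum_mul]
    exact Finset.sum_congr rfl fun i _ => hq i
  rw [h1]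
  have : ∀ j : Fin N, Real.exp (-η * ∑ k ∈ Finset.range t, expertLoss adv y k j) *
        (1 - expertLoss adv y t j + expertLoss adv y t j * Real.exp (-η)) =
      Real.exp (-η * ∑ k ∈ Finset.range t, expertLoss adv y k j)
        - Real.exp (-η * ∑ k ∈ Finset.range t, expertLoss adv y k j) * expertLoss adv y t j
        + Real.exp (-η * ∑ k ∈ Finset.range t, expertLoss adv y k j) * expertLoss adv y t j
          * Real.exp (-η) := fun j => by ring
  rw [Finset.sum_congr rfl fun j _ => this j]
  rw [Finset.sum_add_distrib, Finset.sum_sub_distrib, ← Finset.sum_mul]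
  unfold ewW at hM ⊢
  linear_combination (1 - Real.exp (-η)) * hM

lemma ew_round_le {N : ℕ} [NeZero N] (c η : ℝ) (hc0 : 0 ≤ c) (hη0 : 0 < η) (hη : η ≤ 1 - 2 * c)
    (adv : ℕ → Fin N → ℝ) (y : ℕ → ℝ) (hadv : ∀ t i, adv t i = 0 ∨ adv t i = 1)
    (hy : ∀ t, y t = 0 ∨ y t = 1) (t : ℕ) :
    expAlgLoss η (fun _ => c) adv y t ≤
      (Real.log (ewW η adv y t) - Real.log (ewW η adv y (t + 1))) / η := by
  set m := ∑ i, ewQ η adv y t i * expertLoss adv y t i with hmdef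
  set p := aggP η adv y t with hpdef
  have hq0 : ∀ i, 0 ≤ ewQ η adv y t i := fun i => ewQ_nonneg η adv y t i
  have hm0 : 0 ≤ m := Finset.sum_nonneg fun i _ => mul_nonneg (hq0 i)
    (by rcases expertLoss_mem adv y t i with h | h <;> rw [h] <;> norm_num)
  have hm1 : m ≤ 1 := by
    rw [hmdef, ← ewQ_sum η adv y t]
    refine Finset.sum_le_sum fun i _ => ?_
    rcases expertLoss_mem adv y t i with h | h <;> rw [h] <;> simp [hq0 i]
  have hE1 : Real.exp (-η) ≤ 1 := by
    rw [Real.exp_le_one_iff]; linarith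
  have hSpos : 0 < 1 - m + m * Real.exp (-η) := by
    nlinarith [Real.exp_pos (-η)]
  have hrhs : (Real.log (ewW η adv y t) - Real.log (ewW η adv y (t + 1))) / η =
      -Real.log (1 - m + m * Real.exp (-η)) / η := by
    rw [ewW_step η adv y t, Real.log_mul (ewW_pos η adv y t).ne' hSpos.ne']
    ring
  rw [hrhs]
  have hk1 := key1 (m := m) hc0 hη0 hη hm0 hm1
  have hk2 := key2 (m := m) hc0 hη0 hη hm0 hm1
  rcases hy t with hy0 | hy1
  · -- y t = 0 : m = p
    have hmp : m = p := by
      rw [hmdef, hpdef]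
      unfold aggP
      refine Finset.sum_congr rfl fun i _ => ?_
      congr 1
      unfold expertLoss
      rw [hy0]
      rcases hadv t i with h | h <;> rw [h] <;> norm_num
    rcases le_or_gt ((1:ℝ)/2) p with hhalf | hhalf
    · have hloss : expAlgLoss η (fun _ => c) adv y t = 2 * (1 - m) * c + 2 * m - 1 := by
        simp only [expAlgLoss, ← hpdef]
        rw [max_eq_left (by linarith), if_pos hhalf, hy0, hmp]
        norm_num
        try ring
      rw [hloss]
      linarith
    · have hknot : ¬ ((1:ℝ)/2 ≤ p) := not_le.mpr hhalf
      have hloss : expAlgLoss η (fun _ => c) adv y t = 2 * c * m := by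
        simp only [expAlgLoss, ← hpdef]
        rw [max_eq_right (by linarith), if_neg hknot, hy0, hmp]
        norm_num
        try ring
      rw [hloss]
      linarith
  · -- y t = 1 : m = 1 - p
    have hmp : m = 1 - p := by
      have hsum : m + p = 1 := by
        rw [hmdef, hpdef]
        unfold aggP
        rw [← Finset.sum_add_distrib, ← ewQ_sum η adv y t]
        refine Finset.sum_congr rfl fun i _ => ?_
        unfold expertLoss
        rw [hy1]
        rcases hadv t i with h | h <;> rw [h] <;> norm_num
      linarith
    rcases le_or_gt ((1:ℝ)/2) p with hhalf | hhalf
    · have hloss : expAlgLoss η (fun _ => c) adv y t = 2 * c * m := by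
        simp only [expAlgLoss, ← hpdef]
        rw [max_eq_left (by linarith), if_pos hhalf, hy1, hmp]
        norm_num
        try ring
      rw [hloss]
      linarith
    · have hknot : ¬ ((1:ℝ)/2 ≤ p) := not_le.mpr hhalf
      have hloss : expAlgLoss η (fun _ => c) adv y t = 2 * (1 - m) * c + 2 * m - 1 := by
        simp only [expAlgLoss, ← hpdef]
        rw [max_eq_right (by linarith), if_neg hknot, hy1, hmp]
        norm_num
        try ring
      rw [hloss]
      linarith

end Weights

end Aux

/-- Theorem 1: fast rate for a fixed abstention cost `c < 1/2` and `0 < η ≤ 1 - 2c`. -/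
theorem abstention_fast_rate (N T : ℕ) (hN : 2 ≤ N) (hT : 1 ≤ T) (c η : ℝ)
    (hc0 : 0 ≤ c) (hc : c < 1 / 2) (hη0 : 0 < η) (hη : η ≤ 1 - 2 * c)
    (adv : ℕ → Fin N → ℝ) (y : ℕ → ℝ)
    (hadv : ∀ t i, adv t i = 0 ∨ adv t i = 1) (hy : ∀ t, y t = 0 ∨ y t = 1) :
    (∑ t ∈ Finset.range T, expAlgLoss η (fun _ => c) adv y t)
        - ⨅ i : Fin N, ∑ t ∈ Finset.range T, expertLoss adv y t i
      ≤ Real.log N / η := by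
  haveI : NeZero N := ⟨by omega⟩
  have hWpos : ∀ t, 0 < ewW η adv y t := ewW_pos η adv y
  have hsum : (∑ t ∈ Finset.range T, expAlgLoss η (fun _ => c) adv y t) ≤
      ∑ t ∈ Finset.range T,
        (Real.log (ewW η adv y t) - Real.log (ewW η adv y (t + 1))) / η :=
    Finset.sum_le_sum fun t _ => ew_round_le c η hc0 hη0 hη adv y hadv hy t
  have htel : (∑ t ∈ Finset.range T,
        (Real.log (ewW η adv y t) - Real.log (ewW η adv y (t + 1))) / η) =
      (Real.log (ewW η adv y 0) - Real.log (ewW η adv y T)) / η := by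
    rw [← Finset.sum_div, Finset.sum_range_sub']
  have hW0 : ewW η adv y 0 = (N : ℝ) := by
    unfold ewW
    simp
  have hkey : ∀ i : Fin N, (∑ t ∈ Finset.range T, expAlgLoss η (fun _ => c) adv y t) ≤
      Real.log N / η + ∑ t ∈ Finset.range T, expertLoss adv y t i := by
    intro i
    have h1 : Real.exp (-η * ∑ t ∈ Finset.range T, expertLoss adv y t i) ≤ ewW η adv y T := by
      unfold ewW
      exact Finset.single_le_sum
        (f := fun j => Real.exp (-η * ∑ k ∈ Finset.range T, expertLoss adv y k j))
        (fun j _ => (Real.exp_pos _).le) (Finset.mem_univ i)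
    have h2 : -η * ∑ t ∈ Finset.range T, expertLoss adv y t i ≤
        Real.log (ewW η adv y T) :=
      (Real.le_log_iff_exp_le (hWpos T)).mpr h1
    have h3 : (Real.log (ewW η adv y 0) - Real.log (ewW η adv y T)) / η ≤
        Real.log N / η + ∑ t ∈ Finset.range T, expertLoss adv y t i := by
      rw [hW0]
      rw [div_le_iff₀ hη0]
      have h4 : 0 < η := hη0
      have h5 : Real.log N - Real.log (ewW η adv y T) ≤
          Real.log N + η * ∑ t ∈ Finset.range T, expertLoss adv y t i := by
        linarith
      calc Real.log N - Real.log (ewW η adv y T)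
          ≤ Real.log N + η * ∑ t ∈ Finset.range T, expertLoss adv y t i := h5
        _ = (Real.log N / η + ∑ t ∈ Finset.range T, expertLoss adv y t i) * η := by
            field_simp
    linarith [hsum, le_of_eq htel]
  have hinf : (∑ t ∈ Finset.range T, expAlgLoss η (fun _ => c) adv y t) - Real.log N / η ≤
      ⨅ i : Fin N, ∑ t ∈ Finset.range T, expertLoss adv y t i :=
    le_ciInf fun i => by linarith [hkey i]
  linarith
end

section
/- If 0 ≤ c ≤ 1/2, then for every η > 0 the exponentially weighted forecaster with abstention satisfies the slow-rate bound ∑_{t=1}^T E[ℓ̂_t] − min_{i∈[N]} ∑_{t=1}^T ℓ_{t,i} ≤ (log N)/η + ηT/8. -/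
/-!
Since `c ≤ 1/2`, the expected loss of the abstaining forecaster in each round is at most
`|p_t - y_t|`, the expected loss of following an expert drawn from `q_t`, so it suffices to
bound the regret of that (Hedge) forecaster. Its log-potential `log ∑_j exp (-η L_{t,j})`
starts at `log N`, ends above `-η min_i L_{T,i}`, and by Hoeffding's lemma drops by at least
`η · (expected loss) - η² / 8` per round.
-/

open Real ProbabilityTheory MeasureTheory

lemma log_sum_mul_exp_le {ι : Type*} [Fintype ι] {q x : ι → ℝ} (hq0 : ∀ i, 0 ≤ q i)
    (hq1 : ∑ i, q i = 1) (hx : ∀ i, x i ∈ Set.Icc (0 : ℝ) 1) (s : ℝ) :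
    log (∑ i, q i * exp (s * x i)) ≤ s * ∑ i, q i * x i + s ^ 2 / 8 := by
  let _ : MeasurableSpace ι := ⊤
  have hsum : ∑ i, ENNReal.ofReal (q i) = 1 := by
    rw [← ENNReal.ofReal_sum_of_nonneg fun i _ => hq0 i, hq1, ENNReal.ofReal_one]
  set μ := (PMF.ofFintype _ hsum).toMeasure
  have hint (f : ι → ℝ) : ∫ i, f i ∂μ = ∑ i, q i * f i := by
    simp [μ, PMF.integral_eq_sum, PMF.ofFintype_apply, ENNReal.toReal_ofReal (hq0 _)]
  have hoeffding := (hasSubgaussianMGF_of_mem_Icc (μ := μ) (measurable_of_finite x).aemeasurable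
    (.of_forall hx)).mgf_le s
  set m := ∑ i, q i * x i
  have hmgf : ∑ i, q i * exp (s * (x i - m)) = (∑ i, q i * exp (s * x i)) * exp (-(s * m)) := by
    rw [Finset.sum_mul]
    exact Finset.sum_congr rfl fun i _ => by rw [mul_assoc, ← exp_add]; ring_nf
  rw [mgf, hint, hint, hmgf] at hoeffding
  obtain ⟨i, -, hi⟩ := Finset.exists_ne_zero_of_sum_ne_zero (hq1 ▸ one_ne_zero : ∑ i, q i ≠ 0)
  have hpos : 0 < ∑ i, q i * exp (s * x i) :=
    Finset.sum_pos' (fun j _ => mul_nonneg (hq0 j) (exp_pos _).le)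
      ⟨i, Finset.mem_univ i, mul_pos ((hq0 i).lt_of_ne' hi) (exp_pos _)⟩
  have := log_le_log (by positivity) hoeffding
  rw [log_mul hpos.ne' (exp_pos _).ne', log_exp, log_exp] at this
  norm_num at this
  linarith

namespace Hedge

variable {ι : Type*} [Fintype ι] (η : ℝ) (ℓ : ℕ → ι → ℝ)

def cumLoss (t : ℕ) (i : ι) : ℝ := ∑ k ∈ Finset.range t, ℓ k i

noncomputable def potential (t : ℕ) : ℝ := ∑ j, exp (-η * cumLoss ℓ t j)

noncomputable def weight (t : ℕ) (i : ι) : ℝ :=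
  exp (-η * cumLoss ℓ t i) / potential η ℓ t

noncomputable def expectedLoss (t : ℕ) : ℝ := ∑ i, weight η ℓ t i * ℓ t i

lemma potential_zero : potential η ℓ 0 = Fintype.card ι := by
  simp [potential, cumLoss]

variable [Nonempty ι]

lemma potential_pos (t : ℕ) : 0 < potential η ℓ t :=
  Finset.sum_pos (fun _ _ => exp_pos _) Finset.univ_nonempty

lemma weight_nonneg (t : ℕ) (i : ι) : 0 ≤ weight η ℓ t i :=
  div_nonneg (exp_pos _).le (potential_pos η ℓ t).le

lemma sum_weight (t : ℕ) : ∑ i, weight η ℓ t i = 1 := by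
  simp only [weight]
  rw [← Finset.sum_div]
  exact div_self (potential_pos η ℓ t).ne'

lemma potential_succ (t : ℕ) :
    potential η ℓ (t + 1) =
      potential η ℓ t * ∑ i, weight η ℓ t i * exp (-η * ℓ t i) := by
  rw [Finset.mul_sum, potential]
  refine Finset.sum_congr rfl fun i _ => ?_
  rw [weight, ← mul_assoc, mul_div_cancel₀ _ (potential_pos η ℓ t).ne', ← exp_add,
    cumLoss, Finset.sum_range_succ, mul_add]
  rfl

variable {ℓ} (hℓ : ∀ t i, ℓ t i ∈ Set.Icc (0 : ℝ) 1)
include hℓ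

lemma log_potential_succ_le (t : ℕ) :
    log (potential η ℓ (t + 1)) ≤
      log (potential η ℓ t) - η * expectedLoss η ℓ t + η ^ 2 / 8 := by
  have hW := potential_pos η ℓ t
  have hS : 0 < ∑ i, weight η ℓ t i * exp (-η * ℓ t i) :=
    (mul_pos_iff_of_pos_left hW).1 (potential_succ η ℓ t ▸ potential_pos η ℓ (t + 1))
  have := log_sum_mul_exp_le (weight_nonneg η ℓ t) (sum_weight η ℓ t) (hℓ t) (-η)
  rw [potential_succ, log_mul hW.ne' hS.ne', expectedLoss]
  linarith

lemma log_potential_le (T : ℕ) :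
    log (potential η ℓ T) ≤
      log (Fintype.card ι) - η * ∑ t ∈ Finset.range T, expectedLoss η ℓ t + T * η ^ 2 / 8 := by
  induction T with
  | zero => simp [potential_zero]
  | succ T ih =>
    rw [Finset.sum_range_succ]
    push_cast
    linarith [log_potential_succ_le η hℓ T]

theorem regret_le (hη : 0 < η) (T : ℕ) :
    ∑ t ∈ Finset.range T, expectedLoss η ℓ t - ⨅ i, cumLoss ℓ T i ≤
      log (Fintype.card ι) / η + η * T / 8 := by
  have hregret (i : ι) : η * (∑ t ∈ Finset.range T, expectedLoss η ℓ t - cumLoss ℓ T i) ≤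
      log (Fintype.card ι) + η * (η * T / 8) := by
    have hlower : -η * cumLoss ℓ T i ≤ log (potential η ℓ T) :=
      (le_log_iff_exp_le (potential_pos η ℓ T)).2 <|
        Finset.single_le_sum (f := fun j => exp (-η * cumLoss ℓ T j))
          (fun _ _ => (exp_pos _).le) (Finset.mem_univ i)
    linarith [log_potential_le η hℓ T]
  rw [sub_le_comm]
  refine le_ciInf fun i => sub_le_comm.1 ?_
  have := div_le_div_of_nonneg_right (hregret i) hη.le
  rwa [mul_div_cancel_left₀ _ hη.ne', add_div, mul_div_cancel_left₀ _ hη.ne'] at this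

end Hedge

lemma mem_Icc_of_eq_zero_or_eq_one {x : ℝ} (h : x = 0 ∨ x = 1) : x ∈ Set.Icc (0 : ℝ) 1 := by
  rcases h with rfl | rfl <;> simp

lemma expertLoss_mem_Icc {N : ℕ} (adv : ℕ → Fin N → ℝ) (y : ℕ → ℝ) (t : ℕ) (i : Fin N) :
    expertLoss adv y t i ∈ Set.Icc (0 : ℝ) 1 := by
  unfold expertLoss
  split_ifs <;> simp

lemma ewQ_eq_weight {N : ℕ} (η : ℝ) (adv : ℕ → Fin N → ℝ) (y : ℕ → ℝ) :
    ewQ η adv y = Hedge.weight η (expertLoss adv y) :=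
  rfl

lemma aggP_mem_Icc {N : ℕ} [Nonempty (Fin N)] (η : ℝ) {adv : ℕ → Fin N → ℝ} (y : ℕ → ℝ) {t : ℕ}
    (hadv : ∀ i, adv t i ∈ Set.Icc (0 : ℝ) 1) : aggP η adv y t ∈ Set.Icc 0 1 := by
  rw [aggP, ewQ_eq_weight]
  exact (convex_Icc 0 1).sum_mem (fun i _ => Hedge.weight_nonneg η _ t i)
    (Hedge.sum_weight η _ t) (fun i _ => hadv i)

lemma expectedLoss_expertLoss {N : ℕ} [Nonempty (Fin N)] (η : ℝ) {adv : ℕ → Fin N → ℝ}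
    {y : ℕ → ℝ} {t : ℕ} (hadv : ∀ i, adv t i = 0 ∨ adv t i = 1) (hy : y t = 0 ∨ y t = 1) :
    Hedge.expectedLoss η (expertLoss adv y) t = |aggP η adv y t - y t| := by
  have hp := aggP_mem_Icc η y fun i => mem_Icc_of_eq_zero_or_eq_one (hadv i)
  rw [Hedge.expectedLoss, ← ewQ_eq_weight]
  rcases hy with hy | hy
  · have hloss (i : Fin N) : expertLoss adv y t i = adv t i := by
      rcases hadv i with h | h <;> simp [expertLoss, h, hy]
    simp only [hloss, hy, sub_zero]
    exact (abs_of_nonneg hp.1).symm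
  · have hloss (i : Fin N) : expertLoss adv y t i = 1 - adv t i := by
      rcases hadv i with h | h <;> simp [expertLoss, h, hy]
    simp only [hloss, hy, mul_sub, mul_one, Finset.sum_sub_distrib]
    rw [ewQ_eq_weight, Hedge.sum_weight, abs_sub_comm, abs_of_nonneg (sub_nonneg.2 hp.2)]
    rfl

/-- With `m = |p - y|`, the forecaster abstains with probability `2m` when `k* = y` and
`2(1 - m)` otherwise; either way `c ≤ 1/2` keeps the expected loss below `m`. -/
lemma expAlgLoss_le_abs_sub {N : ℕ} (η : ℝ) {c : ℕ → ℝ} (adv : ℕ → Fin N → ℝ) (y : ℕ → ℝ) (t : ℕ)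
    (hc : c t ≤ 1 / 2) (hp : aggP η adv y t ∈ Set.Icc 0 1) (hy : y t = 0 ∨ y t = 1) :
    expAlgLoss η c adv y t ≤ |aggP η adv y t - y t| := by
  dsimp only [expAlgLoss]
  generalize aggP η adv y t = p at hp ⊢
  obtain ⟨hp0, hp1⟩ := hp
  have habs : |p| = p ∧ |p - 1| = 1 - p :=
    ⟨abs_of_nonneg hp0, by rw [abs_sub_comm, abs_of_nonneg (by linarith)]⟩
  rcases le_or_gt (1 / 2) p with hp2 | hp2
  · rw [max_eq_left (by linarith), if_pos hp2]
    rcases hy with h | h <;> rw [h] <;> norm_num [habs] <;> nlinarith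
  · rw [max_eq_right (by linarith), if_neg hp2.not_ge]
    rcases hy with h | h <;> rw [h] <;> norm_num [habs] <;> nlinarith

theorem abstention_slow_rate_general (N T : ℕ) (hN : 2 ≤ N) (c η : ℝ)
    (hc : c ≤ 1 / 2) (hη0 : 0 < η)
    (adv : ℕ → Fin N → ℝ) (y : ℕ → ℝ)
    (hadv : ∀ t i, adv t i = 0 ∨ adv t i = 1) (hy : ∀ t, y t = 0 ∨ y t = 1) :
    (∑ t ∈ Finset.range T, expAlgLoss η (fun _ => c) adv y t)
        - ⨅ i : Fin N, ∑ t ∈ Finset.range T, expertLoss adv y t i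
      ≤ Real.log N / η + η * T / 8 := by
  have : Nonempty (Fin N) := ⟨⟨0, by omega⟩⟩
  have hround (t : ℕ) :
      expAlgLoss η (fun _ => c) adv y t ≤ Hedge.expectedLoss η (expertLoss adv y) t := by
    rw [expectedLoss_expertLoss η (hadv t) (hy t)]
    exact expAlgLoss_le_abs_sub η adv y t hc
      (aggP_mem_Icc η y fun i => mem_Icc_of_eq_zero_or_eq_one (hadv t i)) (hy t)
  calc _ ≤ ∑ t ∈ Finset.range T, Hedge.expectedLoss η (expertLoss adv y) t
        - ⨅ i, Hedge.cumLoss (expertLoss adv y) T i :=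
        sub_le_sub_right (Finset.sum_le_sum fun t _ => hround t) _
    _ ≤ _ := by simpa using Hedge.regret_le η (expertLoss_mem_Icc adv y) hη0 T

/-- Slow-rate bound: for any `c ≤ 1/2` and any `η > 0`, the exponentially weighted
forecaster with abstention satisfies `R_T ≤ (log N)/η + ηT/8`. -/
theorem abstention_slow_rate (N T : ℕ) (hN : 2 ≤ N) (hT : 1 ≤ T) (c η : ℝ)
    (hc0 : 0 ≤ c) (hc : c ≤ 1 / 2) (hη0 : 0 < η)
    (adv : ℕ → Fin N → ℝ) (y : ℕ → ℝ)
    (hadv : ∀ t i, adv t i = 0 ∨ adv t i = 1) (hy : ∀ t, y t = 0 ∨ y t = 1) :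
    (∑ t ∈ Finset.range T, expAlgLoss η (fun _ => c) adv y t)
        - ⨅ i : Fin N, ∑ t ∈ Finset.range T, expertLoss adv y t i
      ≤ Real.log N / η + η * T / 8 :=
  abstention_slow_rate_general N T hN c η hc hη0 adv y hadv hy
end

section
/- In the multiclass setting with K ≥ 2 classes, if 0 ≤ c < 1/2 and 0 < η ≤ 1 − 2c, then the multiclass exponentially weighted forecaster with abstention satisfies R_T = ∑_{t=1}^T E[ℓ̂_t] − min_{i∈[N]} ∑_{t=1}^T ℓ_{t,i} ≤ (log N)/η. -/
noncomputable section

/-- Binary loss of expert `i` in round `t` in the multiclass setting: `1[y_{t,i} ≠ y_t]`. -/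
def mcLoss {N K : ℕ} (adv : ℕ → Fin N → Fin K) (y : ℕ → Fin K) (t : ℕ) (i : Fin N) : ℝ :=
  if adv t i = y t then 0 else 1

/-- Normalized exponential weight `q_{t,i}` of expert `i` in round `t`. -/
def mcQ {N K : ℕ} (η : ℝ) (adv : ℕ → Fin N → Fin K) (y : ℕ → Fin K) (t : ℕ)
    (i : Fin N) : ℝ :=
  Real.exp (-η * ∑ k ∈ Finset.range t, mcLoss adv y k i) /
    ∑ j, Real.exp (-η * ∑ k ∈ Finset.range t, mcLoss adv y k j)

/-- Aggregated probability `p_{t,k}` assigned to class `k` in round `t`. -/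
def mcP {N K : ℕ} (η : ℝ) (adv : ℕ → Fin N → Fin K) (y : ℕ → Fin K) (t : ℕ)
    (k : Fin K) : ℝ :=
  ∑ i, mcQ η adv y t i * (if adv t i = k then (1 : ℝ) else 0)

end

section Aux

open Real Finset

/-- Quadratic upper bound on `exp` on `[0,1]`. -/
lemma aux_exp_le_quadratic {x : ℝ} (h0 : 0 ≤ x) (h1 : x ≤ 1) :
    Real.exp x ≤ 1 + x + x ^ 2 := by
  have h := Real.abs_exp_sub_one_sub_id_le (x := x) (by rw [abs_of_nonneg h0]; exact h1)
  have := abs_le.1 h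
  linarith [this.2]

/-- Key inequality A: covers the round where the forecaster's top class is correct. -/
lemma aux_keyA {c η p : ℝ} (hc0 : 0 ≤ c) (hc : c < 1 / 2) (hη0 : 0 < η)
    (hη : η ≤ 1 - 2 * c) (hp0 : 0 ≤ p) (hp1 : p ≤ 1) :
    p + (1 - p) * Real.exp (-η) ≤ Real.exp (-η * (min (2 * (1 - p)) 1 * c)) := by
  have hE0 : 0 < Real.exp (-η) := Real.exp_pos _
  have hEF : Real.exp (-η) * Real.exp η = 1 := by
    rw [← Real.exp_add]; simp
  have hF : 1 + η ≤ Real.exp η := by linarith [Real.add_one_le_exp η]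
  -- 2ηc ≤ 1 - exp(-η)
  have hkey : 2 * η * c ≤ 1 - Real.exp (-η) := by
    nlinarith [mul_le_mul_of_nonneg_left hF hE0.le, mul_pos hη0 hη0]
  have hmin : min (2 * (1 - p)) 1 * c ≤ 2 * (1 - p) * c :=
    mul_le_mul_of_nonneg_right (min_le_left _ _) hc0
  have hstep : Real.exp (-η * (2 * (1 - p) * c)) ≤
      Real.exp (-η * (min (2 * (1 - p)) 1 * c)) := by
    apply Real.exp_le_exp.2
    nlinarith
  refine le_trans ?_ hstep
  have hlb : 1 + (-η * (2 * (1 - p) * c)) ≤ Real.exp (-η * (2 * (1 - p) * c)) := by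
    linarith [Real.add_one_le_exp (-η * (2 * (1 - p) * c))]
  nlinarith [mul_nonneg (sub_nonneg.2 hp1) (sub_nonneg.2 (by linarith : Real.exp (-η) ≤ 1 - 2 * η * c))]

/-- Key inequality C: covers the round where the forecaster's top class is wrong. -/
lemma aux_keyC {c η q u : ℝ} (hc0 : 0 ≤ c) (hc : c < 1 / 2) (hη0 : 0 < η)
    (hη : η ≤ 1 - 2 * c) (hq0 : 0 ≤ q) (hqu : q ≤ u) (hu1 : u ≤ 1) :
    q + (1 - q) * Real.exp (-η) ≤ Real.exp (-η * (1 - 2 * u * (1 - c))) := by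
  have hE0 : 0 < Real.exp (-η) := Real.exp_pos _
  have hE1 : Real.exp (-η) ≤ 1 := Real.exp_le_one_iff.2 (by linarith)
  have hEF : Real.exp (-η) * Real.exp η = 1 := by
    rw [← Real.exp_add]; simp
  have hη1 : η ≤ 1 := by linarith
  have hFq : Real.exp η ≤ 1 + η + η ^ 2 := aux_exp_le_quadratic hη0.le hη1
  -- 1 - E ≤ 2η(1-c)·E  where E = exp(-η)
  have hkey : 1 - Real.exp (-η) ≤ 2 * η * (1 - c) * Real.exp (-η) := by
    nlinarith [mul_le_mul_of_nonneg_left hFq hE0.le, mul_pos hη0 hη0]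
  -- monotonicity in q: q + (1-q)E ≤ u + (1-u)E
  have hmono : q + (1 - q) * Real.exp (-η) ≤ u + (1 - u) * Real.exp (-η) := by
    nlinarith [mul_nonneg (sub_nonneg.2 hqu) (sub_nonneg.2 hE1)]
  refine hmono.trans ?_
  have hsplit : Real.exp (-η * (1 - 2 * u * (1 - c))) =
      Real.exp (-η) * Real.exp (2 * u * η * (1 - c)) := by
    rw [← Real.exp_add]; ring_nf
  rw [hsplit]
  have hX : 1 + 2 * u * η * (1 - c) ≤ Real.exp (2 * u * η * (1 - c)) := by
    linarith [Real.add_one_le_exp (2 * u * η * (1 - c))]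
  have hu0 : 0 ≤ u := hq0.trans hqu
  nlinarith [mul_le_mul_of_nonneg_left hkey hu0,
    mul_le_mul_of_nonneg_left hX hE0.le]

variable {N K : ℕ}

lemma aux_q_nonneg (η : ℝ) (adv : ℕ → Fin N → Fin K) (y : ℕ → Fin K) (t : ℕ)
    (i : Fin N) (hN : 0 < N) : 0 ≤ mcQ η adv y t i := by
  unfold mcQ
  have : (0:ℝ) < ∑ j, Real.exp (-η * ∑ k ∈ Finset.range t, mcLoss adv y k j) := by
    haveI : Nonempty (Fin N) := Fin.pos_iff_nonempty.mp hN
    exact Finset.sum_pos (fun j _ => Real.exp_pos _) Finset.univ_nonempty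
  positivity

lemma aux_q_sum (η : ℝ) (adv : ℕ → Fin N → Fin K) (y : ℕ → Fin K) (t : ℕ)
    (hN : 0 < N) : ∑ i, mcQ η adv y t i = 1 := by
  unfold mcQ
  rw [← Finset.sum_div]
  apply div_self
  have : (0:ℝ) < ∑ j, Real.exp (-η * ∑ k ∈ Finset.range t, mcLoss adv y k j) := by
    haveI : Nonempty (Fin N) := Fin.pos_iff_nonempty.mp hN
    exact Finset.sum_pos (fun j _ => Real.exp_pos _) Finset.univ_nonempty
  exact this.ne'

lemma aux_p_nonneg (η : ℝ) (adv : ℕ → Fin N → Fin K) (y : ℕ → Fin K) (t : ℕ)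
    (k : Fin K) (hN : 0 < N) : 0 ≤ mcP η adv y t k := by
  apply Finset.sum_nonneg
  intro i _
  have := aux_q_nonneg η adv y t i hN
  positivity

lemma aux_p_le_one (η : ℝ) (adv : ℕ → Fin N → Fin K) (y : ℕ → Fin K) (t : ℕ)
    (k : Fin K) (hN : 0 < N) : mcP η adv y t k ≤ 1 := by
  rw [← aux_q_sum η adv y t hN]
  apply Finset.sum_le_sum
  intro i _
  have hq := aux_q_nonneg η adv y t i hN
  split <;> simp [hq]

lemma aux_p_add_le_one (η : ℝ) (adv : ℕ → Fin N → Fin K) (y : ℕ → Fin K) (t : ℕ)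
    {k k' : Fin K} (hkk : k ≠ k') (hN : 0 < N) :
    mcP η adv y t k + mcP η adv y t k' ≤ 1 := by
  rw [← aux_q_sum η adv y t hN]
  unfold mcP
  rw [← Finset.sum_add_distrib]
  apply Finset.sum_le_sum
  intro i _
  have hq := aux_q_nonneg η adv y t i hN
  rcases eq_or_ne (adv t i) k with h | h
  · have h' : adv t i ≠ k' := h ▸ hkk
    simp [h, h', hkk]
  · simp [h, hq]
    split <;> simp [hq]

end Aux

section Main

open Real Finset

variable {N K : ℕ}

/-- Per-round bound: expected loss is at most the decrease of the log-potential over `η`. -/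
lemma aux_round (hN : 2 ≤ N) {c η : ℝ} (hc0 : 0 ≤ c) (hc : c < 1 / 2) (hη0 : 0 < η)
    (hη : η ≤ 1 - 2 * c)
    (adv : ℕ → Fin N → Fin K) (y : ℕ → Fin K) (kstar : ℕ → Fin K)
    (hkstar : ∀ t k, mcP η adv y t k ≤ mcP η adv y t (kstar t)) (t : ℕ) :
    min (2 * (1 - mcP η adv y t (kstar t))) 1 * c
      + (1 - min (2 * (1 - mcP η adv y t (kstar t))) 1) *
          (if kstar t = y t then 0 else 1)
    ≤ (Real.log (∑ j, Real.exp (-η * ∑ k ∈ Finset.range t, mcLoss adv y k j))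
        - Real.log (∑ j, Real.exp (-η * ∑ k ∈ Finset.range (t+1), mcLoss adv y k j))) / η := by
  have hNpos : 0 < N := by omega
  set W : ℕ → ℝ := fun s => ∑ j, Real.exp (-η * ∑ k ∈ Finset.range s, mcLoss adv y k j)
    with hW
  have hWpos : ∀ s, 0 < W s := fun s => by
    haveI : Nonempty (Fin N) := Fin.pos_iff_nonempty.mp hNpos
    exact Finset.sum_pos (fun j _ => Real.exp_pos _) Finset.univ_nonempty
  set Py : ℝ := mcP η adv y t (y t) with hPy
  set Ps : ℝ := mcP η adv y t (kstar t) with hPs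
  -- ratio identity: W (t+1) / W t = Py + (1 - Py) * exp (-η)
  have hratio : W (t + 1) = W t * (Py + (1 - Py) * Real.exp (-η)) := by
    have hstep : W (t + 1) = ∑ j, Real.exp (-η * ∑ k ∈ Finset.range t, mcLoss adv y k j)
        * Real.exp (-η * mcLoss adv y t j) := by
      apply Finset.sum_congr rfl
      intro j _
      rw [← Real.exp_add, Finset.sum_range_succ]
      ring_nf
    rw [hstep]
    have : ∀ j : Fin N, Real.exp (-η * ∑ k ∈ Finset.range t, mcLoss adv y k j)
        * Real.exp (-η * mcLoss adv y t j)
        = W t * (mcQ η adv y t j *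
            ((if adv t j = y t then (1:ℝ) else 0)
              + (if adv t j = y t then (0:ℝ) else 1) * Real.exp (-η))) := by
      intro j
      have hQj : mcQ η adv y t j
          = Real.exp (-η * ∑ k ∈ Finset.range t, mcLoss adv y k j) / W t := rfl
      rw [hQj]
      unfold mcLoss
      split <;>
        simp only [mul_zero, mul_one, Real.exp_zero, zero_add, one_mul] <;>
        field_simp [(hWpos t).ne'] <;> ring
    rw [Finset.sum_congr rfl (fun j _ => this j), ← Finset.mul_sum]
    congr 1
    have h1 : ∑ j, mcQ η adv y t j *
        ((if adv t j = y t then (1:ℝ) else 0)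
          + (if adv t j = y t then (0:ℝ) else 1) * Real.exp (-η))
        = (∑ j, mcQ η adv y t j * (if adv t j = y t then (1:ℝ) else 0))
          + (∑ j, mcQ η adv y t j * (if adv t j = y t then (0:ℝ) else 1)) * Real.exp (-η) := by
      rw [Finset.sum_mul, ← Finset.sum_add_distrib]
      apply Finset.sum_congr rfl
      intro j _
      ring
    rw [h1]
    have h2 : (∑ j, mcQ η adv y t j * (if adv t j = y t then (1:ℝ) else 0)) = Py := rfl
    have h3 : (∑ j, mcQ η adv y t j * (if adv t j = y t then (0:ℝ) else 1)) = 1 - Py := by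
      have hq1 := aux_q_sum η adv y t hNpos
      have hterm : ∀ j : Fin N, mcQ η adv y t j * (if adv t j = y t then (0:ℝ) else 1)
          = mcQ η adv y t j - mcQ η adv y t j * (if adv t j = y t then (1:ℝ) else 0) := by
        intro j; split <;> ring
      rw [Finset.sum_congr rfl (fun j _ => hterm j), Finset.sum_sub_distrib, hq1, h2]
    rw [h2, h3]
  -- bounds on probabilities
  have hPy0 : 0 ≤ Py := aux_p_nonneg η adv y t (y t) hNpos
  have hPs1 : Ps ≤ 1 := aux_p_le_one η adv y t (kstar t) hNpos
  have hPyPs : Py ≤ Ps := hkstar t (y t)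
  have hPs0 : 0 ≤ Ps := hPy0.trans hPyPs
  -- reduce to G ≤ exp(-η * loss)
  set G : ℝ := Py + (1 - Py) * Real.exp (-η) with hG
  have hPy1 : Py ≤ 1 := aux_p_le_one η adv y t (y t) hNpos
  have hE1 : Real.exp (-η) ≤ 1 := Real.exp_le_one_iff.2 (by linarith)
  have hGpos : 0 < G := by
    have hE0 := Real.exp_pos (-η)
    nlinarith [mul_nonneg hPy0 (sub_nonneg.2 hE1)]
  set loss : ℝ := min (2 * (1 - Ps)) 1 * c
      + (1 - min (2 * (1 - Ps)) 1) * (if kstar t = y t then 0 else 1) with hloss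
  have hGle : G ≤ Real.exp (-η * loss) := by
    rcases eq_or_ne (kstar t) (y t) with h | h
    · have hPyPs' : Py = Ps := by rw [hPy, hPs, h]
      have : loss = min (2 * (1 - Ps)) 1 * c := by rw [hloss]; simp [h]
      rw [this, hG, hPyPs']
      exact aux_keyA hc0 hc hη0 hη hPs0 hPs1
    · -- wrong top class
      have hsum : Py + Ps ≤ 1 := by
        have := aux_p_add_le_one η adv y t (k := y t) (k' := kstar t)
          (fun hh => h hh.symm) hNpos
        linarith
      set u : ℝ := min (1 - Ps) (1/2) with hu
      have hmin2 : min (2 * (1 - Ps)) 1 = 2 * u := by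
        rcases le_total (1 - Ps) (1/2) with h' | h'
        · rw [hu, min_eq_left h', min_eq_left (by linarith)]
        · rw [hu, min_eq_right h', min_eq_right (by linarith)]; norm_num
      have hlossu : loss = 1 - 2 * u * (1 - c) := by
        rw [hloss, hmin2]; simp [h]; ring
      have hqu : Py ≤ u := by
        rw [hu]
        refine le_min (by linarith) (by linarith)
      have hu1 : u ≤ 1 := by
        rw [hu]; refine (min_le_right _ _).trans (by norm_num)
      rw [hlossu, hG]
      exact aux_keyC hc0 hc hη0 hη hPy0 hqu hu1
  -- convert to log statement
  have hlogG : Real.log G ≤ -η * loss := by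
    calc Real.log G ≤ Real.log (Real.exp (-η * loss)) :=
          Real.log_le_log hGpos hGle
      _ = -η * loss := Real.log_exp _
  have hWlog : Real.log (W (t+1)) = Real.log (W t) + Real.log G := by
    rw [hratio, Real.log_mul (hWpos t).ne' hGpos.ne']
  show loss ≤ (Real.log (W t) - Real.log (W (t+1))) / η
  rw [le_div_iff₀ hη0, hWlog]
  nlinarith

end Main

/-- Theorem 11: fast rate for the multiclass exponentially weighted forecaster with
abstention. Here `kstar t` is any maximizer of `k ↦ p_{t,k}`, the abstention probability
is `α_t = min(2(1 - p_t^*), 1)`, and the expected per-round loss is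
`α_t·c + (1 - α_t)·1[k_t^* ≠ y_t]`. -/
theorem multiclass_abstention_fast_rate (N K T : ℕ) (hN : 2 ≤ N) (hK : 2 ≤ K)
    (hT : 1 ≤ T) (c η : ℝ) (hc0 : 0 ≤ c) (hc : c < 1 / 2) (hη0 : 0 < η)
    (hη : η ≤ 1 - 2 * c)
    (adv : ℕ → Fin N → Fin K) (y : ℕ → Fin K) (kstar : ℕ → Fin K)
    (hkstar : ∀ t k, mcP η adv y t k ≤ mcP η adv y t (kstar t)) :
    (∑ t ∈ Finset.range T,
        (min (2 * (1 - mcP η adv y t (kstar t))) 1 * c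
          + (1 - min (2 * (1 - mcP η adv y t (kstar t))) 1) *
              (if kstar t = y t then 0 else 1)))
        - ⨅ i : Fin N, ∑ t ∈ Finset.range T, mcLoss adv y t i
      ≤ Real.log N / η := by
  have hNpos : 0 < N := by omega
  haveI : Nonempty (Fin N) := Fin.pos_iff_nonempty.mp hNpos
  set W : ℕ → ℝ := fun s => ∑ j, Real.exp (-η * ∑ k ∈ Finset.range s, mcLoss adv y k j)
    with hW
  have hWpos : ∀ s, 0 < W s := fun s => by
    haveI : Nonempty (Fin N) := Fin.pos_iff_nonempty.mp hNpos
    exact Finset.sum_pos (fun j _ => Real.exp_pos _) Finset.univ_nonempty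
  -- sum the per-round bounds and telescope
  have hsum : (∑ t ∈ Finset.range T,
        (min (2 * (1 - mcP η adv y t (kstar t))) 1 * c
          + (1 - min (2 * (1 - mcP η adv y t (kstar t))) 1) *
              (if kstar t = y t then 0 else 1)))
      ≤ ∑ t ∈ Finset.range T, (Real.log (W t) - Real.log (W (t+1))) / η :=
    Finset.sum_le_sum (fun t _ => aux_round hN hc0 hc hη0 hη adv y kstar hkstar t)
  have htel : ∑ t ∈ Finset.range T, (Real.log (W t) - Real.log (W (t+1))) / η
      = (Real.log (W 0) - Real.log (W T)) / η := by
    rw [← Finset.sum_div]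
    congr 1
    exact Finset.sum_range_sub' (fun t => Real.log (W t)) T
  -- W 0 = N
  have hW0 : W 0 = N := by
    simp [hW]
  -- minimizer of cumulative loss
  set F : Fin N → ℝ := fun i => ∑ t ∈ Finset.range T, mcLoss adv y t i with hF
  obtain ⟨i₀, hi₀⟩ := Finite.exists_min F
  have hInf : (⨅ i : Fin N, F i) = F i₀ :=
    le_antisymm (ciInf_le (Finite.bddBelow_range F) i₀) (le_ciInf hi₀)
  -- lower bound on log W T
  have hWT : Real.exp (-η * F i₀) ≤ W T := by
    have := Finset.single_le_sum
      (f := fun j => Real.exp (-η * ∑ k ∈ Finset.range T, mcLoss adv y k j))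
      (fun j _ => (Real.exp_pos _).le) (Finset.mem_univ i₀)
    exact this
  have hlogWT : -η * F i₀ ≤ Real.log (W T) := by
    calc -η * F i₀ = Real.log (Real.exp (-η * F i₀)) := (Real.log_exp _).symm
      _ ≤ Real.log (W T) := Real.log_le_log (Real.exp_pos _) hWT
  rw [hInf]
  have hfinal : (Real.log (W 0) - Real.log (W T)) / η ≤ Real.log N / η + F i₀ := by
    rw [hW0, div_le_iff₀ hη0]
    have hcancel : Real.log N / η * η = Real.log N := div_mul_cancel₀ _ hη0.ne'
    nlinarith
  calc (∑ t ∈ Finset.range T,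
        (min (2 * (1 - mcP η adv y t (kstar t))) 1 * c
          + (1 - min (2 * (1 - mcP η adv y t (kstar t))) 1) *
              (if kstar t = y t then 0 else 1))) - F i₀
      ≤ (Real.log (W 0) - Real.log (W T)) / η - F i₀ := by
        rw [← htel]; linarith
    _ ≤ Real.log N / η := by linarith
end

section
/- Let c ∈ [0, 1/2] and 0 < η ≤ 2(1 − 2c). Then for every r ∈ [1/2, 1]: −(1/η)·log(1 + r·(e^{−η} − 1)) ≥ c. -/
/-- The inequality from the proof of Theorem 11: for `r ∈ [1/2, 1]` and
`0 < η ≤ 2(1 - 2c)`, the mix loss `-(1/η)·log(1 + r(e^{-η} - 1))` is at least the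
abstention cost `c`. -/
theorem mix_loss_ge_abstention_cost (c η r : ℝ) (hc0 : 0 ≤ c) (hc : c ≤ 1 / 2)
    (hη0 : 0 < η) (hη : η ≤ 2 * (1 - 2 * c)) (hr : 1 / 2 ≤ r) (hr1 : r ≤ 1) :
    c ≤ -(1 / η) * Real.log (1 + r * (Real.exp (-η) - 1)) := by
  set A : ℝ := 1 + r * (Real.exp (-η) - 1) with hA
  have hexppos : 0 < Real.exp (-η) := Real.exp_pos _
  have hexp1 : Real.exp (-η) ≤ 1 := by
    simpa using Real.exp_le_exp.2 (by linarith : -η ≤ 0)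
  have hApos : 0 < A := by nlinarith
  -- quadratic bound: exp(-η) ≤ 1 - η + η^2/2
  have hq : 1 + η + η ^ 2 / 2 ≤ Real.exp η := Real.quadratic_le_exp_of_nonneg hη0.le
  have hqpos : 0 < 1 + η + η ^ 2 / 2 := by nlinarith
  have hub : Real.exp (-η) ≤ 1 - η + η ^ 2 / 2 := by
    rw [Real.exp_neg]
    have h1 : (Real.exp η)⁻¹ ≤ (1 + η + η ^ 2 / 2)⁻¹ :=
      inv_anti₀ hqpos hq
    have h2 : (1 + η + η ^ 2 / 2)⁻¹ ≤ 1 - η + η ^ 2 / 2 := by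
      rw [inv_le_iff_one_le_mul₀ hqpos]
      nlinarith [sq_nonneg η, sq_nonneg (η ^ 2)]
    linarith
  -- key: log A ≤ -(η * c)
  have hkey : Real.log A ≤ -(η * c) := by
    have hlog : Real.log A ≤ A - 1 := Real.log_le_sub_one_of_pos hApos
    have hA1 : A - 1 ≤ -(η * c) := by nlinarith
    linarith
  have hinv : 0 < 1 / η := by positivity
  have := mul_le_mul_of_nonneg_left hkey hinv.le
  have heq : (1 / η) * -(η * c) = -c := by field_simp
  rw [heq] at this; linarith
end
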